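/- Let N ≥ 2, M ≥ 2N-1 with the M angles θ_m = 2πm/M, and suppose the linear map T (the discretized PINEM forward operator, defined on N×N Hermitian matrices by (Tρ)(θ,l) = ∑_{j,k=0}^{N-1} e^{i(l-j)θ} J_{l-j}(2|g|) ρ_{jk} e^{i(k-l)θ} J_{l-k}(2|g|)) is invertible. Then the operator norm of T^{-1} (with Frobenius norm on matrices and Euclidean norm on data) satisfies ‖T^{-1}‖ ≥ ((N-1)!)² / (|g|^{N-1} √((2N-2)! · M)). -/

import Mathlib

open Real

noncomputable section

lemma sum2_ite {α : Type*} [AddCommMonoid α] {n : ℕ} (c d : Fin n)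
    (f : Fin n → Fin n → α) :
    (∑ j : Fin n, ∑ k : Fin n, if j = c ∧ k = d then f j k else 0) = f c d := by
  rw [Finset.sum_eq_single c]
  · rw [Finset.sum_eq_single d]
    · simp
    · intro k _ hk; simp [hk]
    · simp
  · intro j _ hj; exact Finset.sum_eq_zero fun k _ => by simp [hj]
  · simp

lemma sum_cos_zero {M k : ℕ} (hk1 : 0 < k) (hk2 : k < M) :
    ∑ m ∈ Finset.range M, Real.cos (2 * π * k * m / M) = 0 := by
  have hM0 : (M : ℝ) ≠ 0 := Nat.cast_ne_zero.mpr (by omega)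
  have hMc : (M : ℂ) ≠ 0 := Nat.cast_ne_zero.mpr (by omega)
  set z : ℂ := Complex.exp (2 * π * Complex.I * k / M) with hz
  have hz1 : z ≠ 1 := by
    intro h
    rw [hz, Complex.exp_eq_one_iff] at h
    obtain ⟨n, hn⟩ := h
    have : (k : ℂ) = n * M := by
      have hpiI : 2 * (π : ℂ) * Complex.I ≠ 0 := by
        simp [Real.pi_ne_zero, Complex.I_ne_zero, Complex.ofReal_ne_zero]
      field_simp at hn
      apply mul_left_cancel₀ hpiI
      linear_combination (2 * (π : ℂ) * Complex.I) * hn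
    have : (k : ℤ) = n * M := by exact_mod_cast this
    have hn0 : 0 < n := by
      by_contra h
      push_neg at h
      nlinarith [Int.natCast_pos.mpr hk1, this, Int.natCast_pos.mpr (by omega : 0 < M)]
    nlinarith [this, Int.ofNat_lt.mpr hk2, hn0]
  have hgeom : ∑ m ∈ Finset.range M, z ^ m = 0 := by
    rw [geom_sum_eq hz1]
    have : z ^ M = 1 := by
      rw [hz, ← Complex.exp_nat_mul]
      rw [Complex.exp_eq_one_iff]
      refine ⟨k, ?_⟩
      field_simp
      simp
    rw [this]
    simp
  have hre : ∀ m : ℕ, (z ^ m).re = Real.cos (2 * π * k * m / M) := by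
    intro m
    rw [hz, ← Complex.exp_nat_mul]
    have : (m : ℂ) * (2 * π * Complex.I * k / M) = ((2 * π * k * m / M : ℝ) : ℂ) * Complex.I := by
      push_cast; ring
    rw [this, Complex.exp_ofReal_mul_I_re]
  calc ∑ m ∈ Finset.range M, Real.cos (2 * π * k * m / M)
      = (∑ m ∈ Finset.range M, z ^ m).re := by
        rw [Complex.re_sum]; exact Finset.sum_congr rfl fun m _ => (hre m).symm
    _ = 0 := by rw [hgeom]; rfl

lemma choose_sq_sum (n : ℕ) :
    ∑ l ∈ Finset.range (n + 1), (n.choose l) ^ 2 = (2 * n).choose n := by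
  rw [two_mul, Nat.add_choose_eq]
  rw [Finset.Nat.sum_antidiagonal_eq_sum_range_succ (f := fun i j => n.choose i * n.choose j)]
  refine Finset.sum_congr rfl fun i hi => ?_
  rw [Finset.mem_range] at hi
  rw [Nat.choose_symm (by omega), sq]

lemma inv_fact_sq_sum (n : ℕ) :
    ∑ l ∈ Finset.range (n + 1),
      (1 / ((l.factorial : ℝ) * ((n - l).factorial : ℝ))) ^ 2
      = ((2 * n).factorial : ℝ) / ((n.factorial : ℝ)) ^ 4 := by
  have hnf : (n.factorial : ℝ) ≠ 0 := Nat.cast_ne_zero.mpr n.factorial_ne_zero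
  have h1 : ∀ l ∈ Finset.range (n + 1),
      (1 / ((l.factorial : ℝ) * ((n - l).factorial : ℝ))) ^ 2
        = ((n.choose l : ℝ) / (n.factorial : ℝ)) ^ 2 := by
    intro l hl
    rw [Finset.mem_range] at hl
    have hln : l ≤ n := by omega
    have hc := Nat.choose_mul_factorial_mul_factorial hln
    have hcast : ((n.choose l : ℝ)) * (l.factorial : ℝ) * ((n - l).factorial : ℝ)
        = (n.factorial : ℝ) := by exact_mod_cast congrArg (Nat.cast : ℕ → ℝ) hc
    have hl0 : (l.factorial : ℝ) ≠ 0 := Nat.cast_ne_zero.mpr l.factorial_ne_zero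
    have hnl0 : ((n - l).factorial : ℝ) ≠ 0 := Nat.cast_ne_zero.mpr (n - l).factorial_ne_zero
    congr 1
    field_simp
    linear_combination -hcast
  rw [Finset.sum_congr rfl h1]
  have h2 : ∑ l ∈ Finset.range (n + 1), ((n.choose l : ℝ) / (n.factorial : ℝ)) ^ 2
      = (((2 * n).choose n : ℝ)) / ((n.factorial : ℝ)) ^ 2 := by
    simp only [div_pow]
    rw [← Finset.sum_div]
    congr 1
    push_cast [← choose_sq_sum n]
    rfl
  rw [h2]
  have hc2 := Nat.choose_mul_factorial_mul_factorial (Nat.le_mul_of_pos_left n two_pos)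
  have hc2' : (((2 * n).choose n : ℝ)) * (n.factorial : ℝ) * (((2 * n - n).factorial : ℝ))
      = ((2 * n).factorial : ℝ) := by exact_mod_cast congrArg (Nat.cast : ℕ → ℝ) hc2
  have hsub : 2 * n - n = n := by omega
  rw [hsub] at hc2'
  field_simp
  linear_combination hc2'

/-- The discretized PINEM forward operator on `N×N` matrices:
`(Tρ)(θ,l) = ∑_{j,k=0}^{N-1} e^{i(l-j)θ} J_{l-j}(2|g|) ρ_{jk} e^{i(k-l)θ} J_{l-k}(2|g|)`. -/
def Tdisc (J : ℤ → ℝ → ℝ) (g : ℝ) (N : ℕ)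
    (ρ : Matrix (Fin N) (Fin N) ℂ) (θ : ℝ) (l : Fin N) : ℂ :=
  ∑ j : Fin N, ∑ k : Fin N,
    Complex.exp (Complex.I * (((l : ℕ) : ℤ) - ((j : ℕ) : ℤ)) * θ) *
      ((J (((l : ℕ) : ℤ) - ((j : ℕ) : ℤ)) (2 * |g|) : ℝ) : ℂ) * ρ j k *
      Complex.exp (Complex.I * (((k : ℕ) : ℤ) - ((l : ℕ) : ℤ)) * θ) *
      ((J (((l : ℕ) : ℤ) - ((k : ℕ) : ℤ)) (2 * |g|) : ℝ) : ℂ)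

/-- Lower bound on the norm of the inverse of the discretized PINEM forward operator:
if `N ≥ 2`, `M ≥ 2N-1` (with equally spaced angles `θ_m = 2πm/M`), `J` is the Bessel
function of the first kind (satisfying `|J n (2x)| ≤ |x|^{|n|}/|n|!`), and `T` is invertible
on Hermitian matrices, then any bound `L` for the inverse (Frobenius norm on matrices,
Euclidean norm on data) satisfies `L ≥ ((N-1)!)² / (|g|^{N-1} √((2N-2)!·M))`. -/
theorem Tdisc_inverse_norm_lower_bound (J : ℤ → ℝ → ℝ)
    (hJ : ∀ (n : ℤ) (x : ℝ), |J n (2 * x)| ≤ |x| ^ n.natAbs / (Nat.factorial n.natAbs : ℝ))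
    (g : ℝ) (N M : ℕ) (hN : 2 ≤ N) (hM : 2 * N - 1 ≤ M)
    (hInv : ∀ ρ σ : Matrix (Fin N) (Fin N) ℂ, ρ.IsHermitian → σ.IsHermitian →
      (∀ (m : Fin M) (l : Fin N),
        Tdisc J g N ρ (2 * π * (m : ℕ) / M) l = Tdisc J g N σ (2 * π * (m : ℕ) / M) l) →
      ρ = σ)
    (L : ℝ)
    (hL : ∀ ρ : Matrix (Fin N) (Fin N) ℂ, ρ.IsHermitian →
      Real.sqrt (∑ j : Fin N, ∑ k : Fin N, ‖ρ j k‖ ^ 2) ≤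
        L * Real.sqrt (∑ m : Fin M, ∑ l : Fin N,
          ‖Tdisc J g N ρ (2 * π * (m : ℕ) / M) l‖ ^ 2)) :
    ((Nat.factorial (N - 1) : ℝ)) ^ 2 /
        (|g| ^ (N - 1) * Real.sqrt ((Nat.factorial (2 * N - 2) : ℝ) * M)) ≤ L := by
  
  have hn1 : N - 1 < N := by omega
  set a : Fin N := ⟨0, by omega⟩ with ha
  set b : Fin N := ⟨N - 1, hn1⟩ with hb
  have hab : a ≠ b := by
    simp only [ha, hb, ne_eq, Fin.mk.injEq]
    omega
  set η : Matrix (Fin N) (Fin N) ℂ :=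
    Matrix.of fun j k => (if j = a ∧ k = b then (1 : ℂ) else 0) +
      (if j = b ∧ k = a then 1 else 0) with hη
  have entry : ∀ j k, η j k = (if j = a ∧ k = b then (1 : ℂ) else 0) +
      (if j = b ∧ k = a then 1 else 0) := fun _ _ => rfl
  have hherm : η.IsHermitian := by
    ext j k
    rw [Matrix.conjTranspose_apply, entry, entry, star_add]
    simp only [apply_ite (star : ℂ → ℂ), star_one, star_zero]
    rw [add_comm]
    congr 1 <;> · congr 1; · rw [eq_iff_iff]; constructor <;> exact fun h => ⟨h.2, h.1⟩
  -- the product of Bessel values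
  set A : Fin N → ℝ := fun l =>
    J (((l : ℕ) : ℤ)) (2 * |g|) * J ((((l : ℕ)) : ℤ) - (((N - 1 : ℕ)) : ℤ)) (2 * |g|) with hA
  have hT : ∀ (θ : ℝ) (l : Fin N), Tdisc J g N η θ l
      = ((2 * Real.cos (((N - 1 : ℕ) : ℝ) * θ) * A l : ℝ) : ℂ) := by
    intro θ l
    unfold Tdisc
    simp only [entry, mul_add, add_mul, mul_ite, ite_mul, mul_one, mul_zero, zero_mul,
      Finset.sum_add_distrib]
    rw [sum2_ite, sum2_ite]
    have hav : (a : ℕ) = 0 := rfl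
    have hbv : (b : ℕ) = N - 1 := rfl
    simp only [hav, hbv, Nat.cast_zero, Int.cast_zero, sub_zero]
    have main : ∀ (u v c1 c2 : ℂ),
        Complex.exp (Complex.I * u * (θ : ℂ)) * c1 *
            Complex.exp (Complex.I * (v - u) * (θ : ℂ)) * c2 +
          Complex.exp (Complex.I * (u - v) * (θ : ℂ)) * c2 *
            Complex.exp (Complex.I * (0 - u) * (θ : ℂ)) * c1
        = 2 * Complex.cos (v * (θ : ℂ)) * (c1 * c2) := by
      intro u v c1 c2
      have e1 : Complex.exp (Complex.I * u * (θ : ℂ)) *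
          Complex.exp (Complex.I * (v - u) * (θ : ℂ))
          = Complex.exp (v * (θ : ℂ) * Complex.I) := by
        rw [← Complex.exp_add]; congr 1; ring
      have e2 : Complex.exp (Complex.I * (u - v) * (θ : ℂ)) *
          Complex.exp (Complex.I * (0 - u) * (θ : ℂ))
          = Complex.exp (-(v * (θ : ℂ)) * Complex.I) := by
        rw [← Complex.exp_add]; congr 1; ring
      calc Complex.exp (Complex.I * u * (θ : ℂ)) * c1 *
              Complex.exp (Complex.I * (v - u) * (θ : ℂ)) * c2 +
            Complex.exp (Complex.I * (u - v) * (θ : ℂ)) * c2 *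
              Complex.exp (Complex.I * (0 - u) * (θ : ℂ)) * c1
          = (Complex.exp (Complex.I * u * (θ : ℂ)) *
              Complex.exp (Complex.I * (v - u) * (θ : ℂ)) +
             Complex.exp (Complex.I * (u - v) * (θ : ℂ)) *
              Complex.exp (Complex.I * (0 - u) * (θ : ℂ))) * (c1 * c2) := by ring
        _ = (Complex.exp (v * (θ : ℂ) * Complex.I) +
             Complex.exp (-(v * (θ : ℂ)) * Complex.I)) * (c1 * c2) := by rw [e1, e2]
        _ = 2 * Complex.cos (v * (θ : ℂ)) * (c1 * c2) := by rw [Complex.two_cos]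
    rw [main]
    simp only [hA]
    push_cast [Complex.ofReal_cos]
    ring
  have hTnorm : ∀ (θ : ℝ) (l : Fin N),
      ‖Tdisc J g N η θ l‖ ^ 2 = 4 * Real.cos (((N - 1 : ℕ) : ℝ) * θ) ^ 2 * (A l) ^ 2 := by
    intro θ l
    rw [hT, Complex.norm_real, Real.norm_eq_abs, sq_abs]
    ring
  -- Frobenius norm of η
  have hfrob : ∑ j : Fin N, ∑ k : Fin N, ‖η j k‖ ^ 2 = 2 := by
    have h1 : ∀ j k, ‖η j k‖ ^ 2 = (if j = a ∧ k = b then (1 : ℝ) else 0) +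
        (if j = b ∧ k = a then 1 else 0) := by
      intro j k
      rw [entry]
      by_cases h1 : j = a ∧ k = b <;> by_cases h2 : j = b ∧ k = a
      · exact absurd (h1.1.symm.trans h2.1) hab
      all_goals simp [h1, h2, hab]
    simp only [h1, Finset.sum_add_distrib]
    rw [sum2_ite a b (fun _ _ => (1 : ℝ)), sum2_ite b a (fun _ _ => (1 : ℝ))]
    norm_num
  -- sum of cos^2 over the M angles
  have hMpos : 0 < M := by omega
  have hcossum : ∑ m : Fin M, Real.cos (((N - 1 : ℕ) : ℝ) * (2 * π * (m : ℕ) / M)) ^ 2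
      = (M : ℝ) / 2 := by
    rw [Fin.sum_univ_eq_sum_range (fun m => Real.cos (((N - 1 : ℕ) : ℝ) * (2 * π * (m : ℕ) / M)) ^ 2) M]
    have harg : ∀ m : ℕ, 2 * (((N - 1 : ℕ) : ℝ) * (2 * π * (m : ℕ) / M))
        = 2 * π * ((2 * N - 2 : ℕ) : ℝ) * m / M := by
      intro m
      push_cast [Nat.cast_sub (by omega : 1 ≤ N), Nat.cast_sub (by omega : 2 ≤ 2 * N)]
      ring
    simp only [Real.cos_sq, harg]
    rw [Finset.sum_add_distrib, ← Finset.sum_div, ← Finset.sum_div,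
      sum_cos_zero (by omega : 0 < 2 * N - 2) (by omega : 2 * N - 2 < M)]
    simp
  -- bound on each A l
  have hgpow : ∀ l : Fin N, |A l| ≤ |g| ^ (N - 1) /
      (((l : ℕ).factorial : ℝ) * ((N - 1 - (l : ℕ)).factorial : ℝ)) := by
    intro l
    have h1 := hJ (((l : ℕ) : ℤ)) |g|
    have h2 := hJ ((((l : ℕ)) : ℤ) - (((N - 1 : ℕ)) : ℤ)) |g|
    rw [abs_abs] at h1 h2
    have hnab1 : (((l : ℕ) : ℤ)).natAbs = (l : ℕ) := Int.natAbs_natCast _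
    have hlN : (l : ℕ) ≤ N - 1 := by omega
    have hnab2 : ((((l : ℕ)) : ℤ) - (((N - 1 : ℕ)) : ℤ)).natAbs = N - 1 - (l : ℕ) := by
      omega
    rw [hnab1] at h1
    rw [hnab2] at h2
    have hJ1nn : (0 : ℝ) ≤ |g| ^ (l : ℕ) / (((l : ℕ).factorial : ℝ)) := by positivity
    have habs : |A l| = |J (((l : ℕ) : ℤ)) (2 * |g|)| *
        |J ((((l : ℕ)) : ℤ) - (((N - 1 : ℕ)) : ℤ)) (2 * |g|)| := abs_mul _ _
    rw [habs]
    calc |J (((l : ℕ) : ℤ)) (2 * |g|)| * |J ((((l : ℕ)) : ℤ) - (((N - 1 : ℕ)) : ℤ)) (2 * |g|)|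
        ≤ (|g| ^ (l : ℕ) / (((l : ℕ).factorial : ℝ))) *
          (|g| ^ (N - 1 - (l : ℕ)) / (((N - 1 - (l : ℕ)).factorial : ℝ))) := by
          exact mul_le_mul h1 h2 (abs_nonneg _) hJ1nn
      _ = |g| ^ (N - 1) / (((l : ℕ).factorial : ℝ) * ((N - 1 - (l : ℕ)).factorial : ℝ)) := by
          rw [div_mul_div_comm, ← pow_add]
          congr 2
          omega
  have hAsum : ∑ l : Fin N, (A l) ^ 2 ≤
      ((Nat.factorial (2 * N - 2) : ℝ) / ((Nat.factorial (N - 1) : ℝ)) ^ 4) * |g| ^ (2 * (N - 1)) := by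
    have hstep : ∀ l : Fin N, (A l) ^ 2 ≤
        (1 / (((l : ℕ).factorial : ℝ) * ((N - 1 - (l : ℕ)).factorial : ℝ))) ^ 2 * |g| ^ (2 * (N - 1)) := by
      intro l
      have := hgpow l
      have h2 : (A l) ^ 2 ≤ (|g| ^ (N - 1) /
          (((l : ℕ).factorial : ℝ) * ((N - 1 - (l : ℕ)).factorial : ℝ))) ^ 2 := by
        rw [← sq_abs]
        exact pow_le_pow_left₀ (abs_nonneg _) this 2
      calc (A l) ^ 2 ≤ _ := h2
        _ = (1 / (((l : ℕ).factorial : ℝ) * ((N - 1 - (l : ℕ)).factorial : ℝ))) ^ 2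
            * |g| ^ (2 * (N - 1)) := by
          rw [div_pow, ← pow_mul, mul_comm (N - 1) 2]
          ring
    calc ∑ l : Fin N, (A l) ^ 2
        ≤ ∑ l : Fin N, (1 / (((l : ℕ).factorial : ℝ) * ((N - 1 - (l : ℕ)).factorial : ℝ))) ^ 2
            * |g| ^ (2 * (N - 1)) := Finset.sum_le_sum fun l _ => hstep l
      _ = (∑ l : Fin N, (1 / (((l : ℕ).factorial : ℝ) * ((N - 1 - (l : ℕ)).factorial : ℝ))) ^ 2)
            * |g| ^ (2 * (N - 1)) := by rw [Finset.sum_mul]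
      _ = ((Nat.factorial (2 * N - 2) : ℝ) / ((Nat.factorial (N - 1) : ℝ)) ^ 4)
            * |g| ^ (2 * (N - 1)) := by
          congr 1
          rw [Fin.sum_univ_eq_sum_range
            (fun l => (1 / ((l.factorial : ℝ) * ((N - 1 - l).factorial : ℝ))) ^ 2) N]
          have h := inv_fact_sq_sum (N - 1)
          rw [show (N - 1) + 1 = N by omega, show 2 * (N - 1) = 2 * N - 2 by omega] at h
          exact h
  -- total data norm
  set S : ℝ := ∑ m : Fin M, ∑ l : Fin N, ‖Tdisc J g N η (2 * π * (m : ℕ) / M) l‖ ^ 2 with hS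
  have hSval : S = 2 * (M : ℝ) * ∑ l : Fin N, (A l) ^ 2 := by
    rw [hS]
    have h1 : ∀ m : Fin M, ∑ l : Fin N, ‖Tdisc J g N η (2 * π * (m : ℕ) / M) l‖ ^ 2
        = 4 * Real.cos (((N - 1 : ℕ) : ℝ) * (2 * π * (m : ℕ) / M)) ^ 2
          * ∑ l : Fin N, (A l) ^ 2 := by
      intro m
      rw [Finset.mul_sum]
      exact Finset.sum_congr rfl fun l _ => hTnorm _ _
    rw [Finset.sum_congr rfl fun m _ => h1 m, ← Finset.sum_mul, ← Finset.mul_sum, hcossum]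
    ring
  have hLη := hL η hherm
  rw [hfrob] at hLη
  have hs2 : (0 : ℝ) < Real.sqrt 2 := by positivity
  have hL0 : 0 ≤ L := by
    by_contra hneg
    push_neg at hneg
    nlinarith [Real.sqrt_nonneg S, mul_nonneg (neg_nonneg.mpr hneg.le) (Real.sqrt_nonneg S)]
  rcases eq_or_ne g 0 with hg | hg
  · subst hg
    rw [abs_zero, zero_pow (by omega : N - 1 ≠ 0), zero_mul, div_zero]
    exact hL0
  · set F : ℝ := ((N - 1).factorial : ℝ) with hF
    set K : ℝ := ((2 * N - 2).factorial : ℝ) with hK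
    set D : ℝ := |g| ^ (N - 1) * Real.sqrt (K * M) with hD
    have hFpos : (0 : ℝ) < F := by
      rw [hF]; exact_mod_cast Nat.factorial_pos _
    have hKpos : (0 : ℝ) < K := by
      rw [hK]; exact_mod_cast Nat.factorial_pos _
    have hMr : (0 : ℝ) < M := by exact_mod_cast hMpos
    have hDpos : 0 < D := by
      apply mul_pos (pow_pos (abs_pos.mpr hg) _)
      exact Real.sqrt_pos.mpr (mul_pos hKpos hMr)
    have hSB : S ≤ (Real.sqrt 2 * D / F ^ 2) ^ 2 := by
      rw [hSval]
      have hKM : (0 : ℝ) ≤ K * M := le_of_lt (mul_pos hKpos hMr)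
      have hsq : (Real.sqrt 2 * D / F ^ 2) ^ 2
          = 2 * (|g| ^ (N - 1)) ^ 2 * (K * M) / F ^ 4 := by
        rw [div_pow, mul_pow, Real.sq_sqrt (by norm_num : (0:ℝ) ≤ 2), hD, mul_pow,
          Real.sq_sqrt hKM]
        ring
      rw [hsq]
      calc 2 * (M : ℝ) * ∑ l : Fin N, (A l) ^ 2
          ≤ 2 * (M : ℝ) * ((K / F ^ 4) * |g| ^ (2 * (N - 1))) :=
            mul_le_mul_of_nonneg_left hAsum (by positivity)
        _ = 2 * (|g| ^ (N - 1)) ^ 2 * (K * M) / F ^ 4 := by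
            rw [← pow_mul]
            ring
    have hsqrtS : Real.sqrt S ≤ Real.sqrt 2 * D / F ^ 2 := by
      have hnn : 0 ≤ Real.sqrt 2 * D / F ^ 2 := by positivity
      calc Real.sqrt S ≤ Real.sqrt ((Real.sqrt 2 * D / F ^ 2) ^ 2) := Real.sqrt_le_sqrt hSB
        _ = _ := Real.sqrt_sq hnn
    have h4 : Real.sqrt 2 ≤ L * (Real.sqrt 2 * D / F ^ 2) :=
      le_trans hLη (mul_le_mul_of_nonneg_left hsqrtS hL0)
    have h5 : 1 ≤ L * D / F ^ 2 := by
      have h6 : Real.sqrt 2 * 1 ≤ Real.sqrt 2 * (L * D / F ^ 2) := by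
        calc Real.sqrt 2 * 1 = Real.sqrt 2 := mul_one _
          _ ≤ L * (Real.sqrt 2 * D / F ^ 2) := h4
          _ = Real.sqrt 2 * (L * D / F ^ 2) := by ring
      exact le_of_mul_le_mul_left h6 hs2
    rw [div_le_iff₀ hDpos]
    rw [le_div_iff₀ (by positivity : (0:ℝ) < F ^ 2)] at h5
    linarith
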